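/- In the same setting, with ℓ : B' → Q a homomorphism to an abelian group Q satisfying ℓ ∘ u ∘ L = ℓ (i.e., ℓ vanishes on the image of u∘L − id), one has ℓ ∘ w' = ℓ ∘ u ∘ w ∘ Θ as maps E → Q. -/
import Mathlib


/-- In the same setting (exact rows `0 → B → E_f → V → 0` and
`0 → B' → E → V → 0` with compatible injections `u`, `i`, splitting `w` of the top
row, retraction `L : B' → B` of `u`, and the induced maps `Θ : E → E_f`,
`w' : E → B'`), if `ℓ : B' → Q` is a homomorphism with `ℓ ∘ u ∘ L = ℓ`, then
`ℓ ∘ w' = ℓ ∘ u ∘ w ∘ Θ` as maps `E → Q`. -/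
theorem stmt_14 (B Ef V B' E : Type*)
    [AddCommGroup B] [AddCommGroup Ef] [AddCommGroup V] [AddCommGroup B'] [AddCommGroup E]
    (j : B →+ Ef) (π : Ef →+ V) (j' : B' →+ E) (π' : E →+ V)
    (u : B →+ B') (i : Ef →+ E)
    (hj : Function.Injective j) (hπ : Function.Surjective π)
    (hex : ∀ x : Ef, π x = 0 ↔ ∃ b, j b = x)
    (hj' : Function.Injective j') (hπ' : Function.Surjective π')
    (hex' : ∀ x : E, π' x = 0 ↔ ∃ b, j' b = x)
    (hc1 : ∀ y : Ef, π' (i y) = π y) (hc2 : ∀ b : B, i (j b) = j' (u b))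
    (w : Ef →+ B) (hw : ∀ b : B, w (j b) = b)
    (L : B' →+ B) (hL : ∀ b : B, L (u b) = b)
    (Θ : E → Ef)
    (hΘ : ∀ (x : E) (y : Ef) (z : B'), π y = π' x → x - i y = j' z → Θ x = y + j (L z))
    (w' : E → B')
    (hw' : ∀ (x : E) (y : Ef) (z : B'), π y = π' x → x - i y = j' z → w' x = u (w y) + z)
    (Q : Type*) [AddCommGroup Q] (ℓ : B' →+ Q)
    (hℓ : ∀ b' : B', ℓ (u (L b')) = ℓ b') :
    ∀ x : E, ℓ (w' x) = ℓ (u (w (Θ x))) := by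
  intro x
  obtain ⟨y, hy⟩ := hπ (π' x)
  have hz0 : π' (x - i y) = 0 := by
    simp [map_sub, hc1, hy]
  obtain ⟨z, hz⟩ := (hex' _).1 hz0
  rw [hw' x y z hy hz.symm, hΘ x y z hy hz.symm]
  simp [map_add, hw, hℓ]
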